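/- arXiv:1705.00160 — 6 statements merged into one kernel-verified Lean document; each statement's English description precedes it below -/
import Mathlib

section
/- Let a, b, c be positive real numbers and define F(x) = a*x^2 + b*x + c. Consider the sequence x_1 = c, x_{k+1} = F(x_k). If b < 1 and 0 < (b-1)^2 - 4*a*c < 1, then the sequence converges, and its limit equals x* = (-(b-1) - sqrt((b-1)^2 - 4*a*c))/(2*a), the smaller root of a*x^2 + (b-1)*x + c = 0. -/
/-- For `F x = a x² + b x + c` with `a, b, c > 0`, the sequence
`x₁ = c`, `x_{k+1} = F (x_k)` converges, provided `b < 1` and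
`0 < (b-1)² - 4ac < 1`, and its limit is the smaller root
`x* = (-(b-1) - √((b-1)² - 4ac)) / (2a)` of `a x² + (b-1) x + c = 0`. -/
theorem stmt0 (a b c : ℝ) (ha : 0 < a) (hb : 0 < b) (hc : 0 < c)
    (x : ℕ → ℝ) (hx1 : x 1 = c)
    (hrec : ∀ k ≥ 1, x (k + 1) = a * (x k) ^ 2 + b * (x k) + c)
    (hb1 : b < 1)
    (hdisc0 : 0 < (b - 1) ^ 2 - 4 * a * c)
    (hdisc1 : (b - 1) ^ 2 - 4 * a * c < 1) :
    Filter.Tendsto x Filter.atTop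
      (nhds ((-(b - 1) - Real.sqrt ((b - 1) ^ 2 - 4 * a * c)) / (2 * a))) ∧
    a * ((-(b - 1) - Real.sqrt ((b - 1) ^ 2 - 4 * a * c)) / (2 * a)) ^ 2
      + (b - 1) * ((-(b - 1) - Real.sqrt ((b - 1) ^ 2 - 4 * a * c)) / (2 * a))
      + c = 0 := by
  set s := Real.sqrt ((b - 1) ^ 2 - 4 * a * c) with hsdef
  have hs2 : s ^ 2 = (b - 1) ^ 2 - 4 * a * c := Real.sq_sqrt hdisc0.le
  have hs0 : 0 < s := Real.sqrt_pos.mpr hdisc0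
  have hs1 : s < 1 := by nlinarith [hs2]
  have hsb : s < 1 - b := by nlinarith [hs2]
  set L := (-(b - 1) - s) / (2 * a) with hL
  clear_value s L
  have h2a : (0:ℝ) < 2 * a := by positivity
  have hroot : a * L ^ 2 + (b - 1) * L + c = 0 := by
    rw [hL]; field_simp; nlinarith [hs2]
  have hcL : c ≤ L := by
    rw [hL, le_div_iff₀ h2a]
    nlinarith [hs2]
  have hL0 : 0 < L := lt_of_lt_of_le hc hcL
  have hLq : 2 * a * L + b = 1 - s := by
    rw [hL]; field_simp; ring
  -- main invariant
  have key : ∀ k, 1 ≤ k →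
      0 < x k ∧ x k ≤ L ∧ L - x k ≤ (1 - s) ^ (k - 1) * (L - c) := by
    intro k hk
    induction k, hk using Nat.le_induction with
    | base => simp [hx1]; exact ⟨hc, hcL⟩
    | succ k hk ih =>
      obtain ⟨hxpos, hxL, hxbound⟩ := ih
      have hrk := hrec k hk
      have hpos : 0 < x (k + 1) := by rw [hrk]; nlinarith
      have hfac : 0 ≤ (L - x k) * (a * (L + x k) + b) := by
        apply mul_nonneg (by linarith)
        nlinarith
      have hxL' : x (k + 1) ≤ L := by rw [hrk]; nlinarith [hfac, hroot]
      have hstep : L - x (k + 1) ≤ (1 - s) * (L - x k) := by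
        rw [hrk, ← hLq]
        nlinarith [sq_nonneg (L - x k), hroot]
      refine ⟨hpos, hxL', ?_⟩
      have hk' : k - 1 + 1 = k := Nat.succ_pred_eq_of_pos hk
      have hpow : (1 - s) ^ (k + 1 - 1) = (1 - s) * (1 - s) ^ (k - 1) := by
        rw [Nat.add_sub_cancel, ← pow_succ', hk']
      rw [hpow]
      calc L - x (k + 1) ≤ (1 - s) * (L - x k) := hstep
        _ ≤ (1 - s) * ((1 - s) ^ (k - 1) * (L - c)) := by
            apply mul_le_mul_of_nonneg_left hxbound (by linarith)
        _ = (1 - s) * (1 - s) ^ (k - 1) * (L - c) := by ring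
  refine ⟨?_, hroot⟩
  have hpow0 : Filter.Tendsto (fun k : ℕ => (1 - s) ^ (k - 1) * (L - c))
      Filter.atTop (nhds 0) := by
    have h1 : Filter.Tendsto (fun n : ℕ => (1 - s) ^ n) Filter.atTop (nhds 0) :=
      tendsto_pow_atTop_nhds_zero_of_lt_one (by linarith) (by linarith)
    have h2 : Filter.Tendsto (fun k : ℕ => k - 1) Filter.atTop Filter.atTop :=
      Filter.tendsto_sub_atTop_nat 1
    have h3 := (h1.comp h2).mul_const (L - c)
    rw [zero_mul] at h3
    exact h3
  have hlow : Filter.Tendsto (fun k : ℕ => L - (1 - s) ^ (k - 1) * (L - c))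
      Filter.atTop (nhds L) := by
    have h4 := Filter.Tendsto.const_sub L hpow0
    rw [sub_zero] at h4
    exact h4
  refine tendsto_of_tendsto_of_tendsto_of_le_of_le' hlow tendsto_const_nhds ?_ ?_
  · filter_upwards [Filter.eventually_ge_atTop 1] with k hk
    have := (key k hk).2.2
    linarith
  · filter_upwards [Filter.eventually_ge_atTop 1] with k hk
    exact (key k hk).2.1
end

section
/- Let a, b, c be positive reals with b < 1 and 0 < (b-1)^2 - 4*a*c < 1, and let F(x) = a*x^2 + b*x + c with smaller fixed point x* = (-(b-1) - sqrt((b-1)^2-4ac))/(2a). Then F maps the interval [c, x*] into itself and F is a contraction on [c, x*]: for all x, y in [c, x*], |F(x) - F(y)| ≤ L*|x - y| with L = 1 - sqrt((b-1)^2 - 4*a*c) < 1. -/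
/-! The fixed points of `F x = a x² + b x + c` are the roots of `a x² + (b - 1) x + c`, whose
discriminant is `D = (b - 1)² - 4ac`. Since `F` is increasing on `[0, ∞)`, fixes `x*` and
satisfies `F c ≥ c`, it maps `[c, x*]` into itself as soon as `c ≤ x*`. On that interval the
difference quotient `a (x + y) + b` of `F` is at most `F'(x*) = 2 a x* + b = 1 - √D`. -/

open Real Set

noncomputable def lowerFixedPoint (a b c : ℝ) : ℝ :=
  (-(b - 1) - √(discrim a (b - 1) c)) / (2 * a)

section

variable {a b c : ℝ}

theorem quadratic_lowerFixedPoint (ha : a ≠ 0) (hd : 0 ≤ discrim a (b - 1) c) :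
    a * lowerFixedPoint a b c ^ 2 + b * lowerFixedPoint a b c + c = lowerFixedPoint a b c := by
  have hroot := (quadratic_eq_zero_iff ha (mul_self_sqrt hd).symm (lowerFixedPoint a b c)).2
    (Or.inr rfl)
  linear_combination hroot

theorem two_mul_lowerFixedPoint_add (ha : a ≠ 0) :
    2 * a * lowerFixedPoint a b c + b = 1 - √(discrim a (b - 1) c) := by
  unfold lowerFixedPoint
  field_simp
  ring

theorem le_lowerFixedPoint (ha : 0 < a) (hb : 0 ≤ b) (hc : 0 ≤ c) (hb1 : b < 1)
    (hd : 0 ≤ discrim a (b - 1) c) : c ≤ lowerFixedPoint a b c := by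
  unfold discrim at hd
  have h4ac : 4 * a * c ≤ 1 - b := by nlinarith
  have hsqrt : √(discrim a (b - 1) c) ≤ 1 - b - 2 * a * c := by
    rw [sqrt_le_left (by nlinarith), discrim]
    nlinarith [mul_nonneg (mul_nonneg ha.le hc) hb, mul_nonneg (mul_nonneg ha.le hc) hc]
  rw [lowerFixedPoint, le_div_iff₀ (by positivity)]
  linarith

end

section

variable {a b c t : ℝ}

theorem abs_quadratic_sub_le (ha : 0 ≤ a) (hb : 0 ≤ b) {x y : ℝ} (hx : x ∈ Icc 0 t)
    (hy : y ∈ Icc 0 t) :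
    |(a * x ^ 2 + b * x + c) - (a * y ^ 2 + b * y + c)| ≤ (2 * a * t + b) * |x - y| := by
  have hslope : a * (x + y) + b ≤ 2 * a * t + b := by
    nlinarith [mul_le_mul_of_nonneg_left (add_le_add hx.2 hy.2) ha]
  rw [show (a * x ^ 2 + b * x + c) - (a * y ^ 2 + b * y + c) = (a * (x + y) + b) * (x - y) by
      ring, abs_mul, abs_of_nonneg (by nlinarith [hx.1, hy.1])]
  exact mul_le_mul_of_nonneg_right hslope (abs_nonneg _)

theorem mapsTo_quadratic_Icc (ha : 0 ≤ a) (hb : 0 ≤ b) (hc : 0 ≤ c)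
    (ht : a * t ^ 2 + b * t + c = t) :
    MapsTo (fun x ↦ a * x ^ 2 + b * x + c) (Icc c t) (Icc c t) := by
  rintro x ⟨hcx, hxt⟩
  have hx : 0 ≤ x := hc.trans hcx
  refine ⟨le_add_of_nonneg_left (by positivity), ?_⟩
  calc a * x ^ 2 + b * x + c ≤ a * t ^ 2 + b * t + c := by gcongr
    _ = t := ht

end

theorem stmt1_general (a b c : ℝ) (ha : 0 < a) (hb : 0 < b) (hc : 0 < c)
    (hb1 : b < 1)
    (hdisc0 : 0 < (b - 1) ^ 2 - 4 * a * c) :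
    (∀ x ∈ Set.Icc c ((-(b - 1) - Real.sqrt ((b - 1) ^ 2 - 4 * a * c)) / (2 * a)),
      a * x ^ 2 + b * x + c ∈
        Set.Icc c ((-(b - 1) - Real.sqrt ((b - 1) ^ 2 - 4 * a * c)) / (2 * a))) ∧
    (∀ x ∈ Set.Icc c ((-(b - 1) - Real.sqrt ((b - 1) ^ 2 - 4 * a * c)) / (2 * a)),
      ∀ y ∈ Set.Icc c ((-(b - 1) - Real.sqrt ((b - 1) ^ 2 - 4 * a * c)) / (2 * a)),
        |(a * x ^ 2 + b * x + c) - (a * y ^ 2 + b * y + c)| ≤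
          (1 - Real.sqrt ((b - 1) ^ 2 - 4 * a * c)) * |x - y|) ∧
    1 - Real.sqrt ((b - 1) ^ 2 - 4 * a * c) < 1 := by
  have hd : 0 ≤ discrim a (b - 1) c := hdisc0.le
  have hct := le_lowerFixedPoint ha hb.le hc.le hb1 hd
  refine ⟨mapsTo_quadratic_Icc ha.le hb.le hc.le (quadratic_lowerFixedPoint ha.ne' hd),
    fun x hx y hy ↦ ?_, by linarith [sqrt_pos.2 hdisc0]⟩
  have hslope := two_mul_lowerFixedPoint_add (b := b) (c := c) ha.ne'
  rw [discrim] at hslope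
  rw [← hslope]
  exact abs_quadratic_sub_le ha.le hb.le ⟨hc.le.trans hx.1, hx.2⟩ ⟨hc.le.trans hy.1, hy.2⟩

/-- With `F x = a x² + b x + c`, `a, b, c > 0`, `b < 1`,
`0 < (b-1)² - 4ac < 1`, and smaller fixed point
`x* = (-(b-1) - √((b-1)² - 4ac)) / (2a)`, the map `F` sends `[c, x*]` into
itself and is a contraction there with constant
`L = 1 - √((b-1)² - 4ac) < 1`. -/
theorem stmt1 (a b c : ℝ) (ha : 0 < a) (hb : 0 < b) (hc : 0 < c)
    (hb1 : b < 1)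
    (hdisc0 : 0 < (b - 1) ^ 2 - 4 * a * c)
    (hdisc1 : (b - 1) ^ 2 - 4 * a * c < 1) :
    (∀ x ∈ Set.Icc c ((-(b - 1) - Real.sqrt ((b - 1) ^ 2 - 4 * a * c)) / (2 * a)),
      a * x ^ 2 + b * x + c ∈
        Set.Icc c ((-(b - 1) - Real.sqrt ((b - 1) ^ 2 - 4 * a * c)) / (2 * a))) ∧
    (∀ x ∈ Set.Icc c ((-(b - 1) - Real.sqrt ((b - 1) ^ 2 - 4 * a * c)) / (2 * a)),
      ∀ y ∈ Set.Icc c ((-(b - 1) - Real.sqrt ((b - 1) ^ 2 - 4 * a * c)) / (2 * a)),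
        |(a * x ^ 2 + b * x + c) - (a * y ^ 2 + b * y + c)| ≤
          (1 - Real.sqrt ((b - 1) ^ 2 - 4 * a * c)) * |x - y|) ∧
    1 - Real.sqrt ((b - 1) ^ 2 - 4 * a * c) < 1 :=
  stmt1_general a b c ha hb hc hb1 hdisc0
end

section
/- Let P ∈ ℝ^{n×n} be symmetric positive semidefinite solving A P + P Aᵀ + H (P ⊗ P) Hᵀ + ∑_{k=1}^m N_k P N_kᵀ + B Bᵀ = 0. Then for any v ∈ ker P: Bᵀ v = 0, P N_kᵀ v = 0 for all k, (P ⊗ P) Hᵀ v = 0, and P Aᵀ v = 0. -/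
/-!
Pairing the equation with `v ∈ ker P` kills the Lyapunov part `A P + P Aᵀ` (as `P` is
symmetric), leaving a sum of nonnegative quadratic forms `(Hᵀv)ᵀ (P ⊗ P) (Hᵀv)`,
`(Nₖᵀv)ᵀ P (Nₖᵀv)` and `|Bᵀv|²` equal to zero. Each one vanishes, and for positive
semidefinite `Q`, `xᵀ Q x = 0` forces `Q x = 0`. Applying the equation to `v` then
leaves only `P Aᵀ v`.
-/

open Matrix Kronecker

namespace Matrix

variable {ι κ : Type*} [Fintype ι] [Fintype κ]

lemma dotProduct_mul_mul_transpose_mulVec {R : Type*} [CommSemiring R]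
    (M : Matrix ι κ R) (Q : Matrix κ κ R) (v : ι → R) :
    v ⬝ᵥ (M * Q * Mᵀ) *ᵥ v = (Mᵀ *ᵥ v) ⬝ᵥ Q *ᵥ (Mᵀ *ᵥ v) := by
  rw [← mulVec_mulVec, ← mulVec_mulVec, dotProduct_mulVec, mulVec_transpose]

lemma dotProduct_mul_transpose_mulVec {R : Type*} [CommSemiring R] (M : Matrix ι κ R)
    (v : ι → R) : v ⬝ᵥ (M * Mᵀ) *ᵥ v = (Mᵀ *ᵥ v) ⬝ᵥ (Mᵀ *ᵥ v) := by
  rw [← mulVec_mulVec, dotProduct_mulVec, mulVec_transpose]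

lemma IsSymm.dotProduct_mul_add_mul_transpose_add_mulVec {R : Type*} [CommSemiring R]
    {P : Matrix ι ι R} (hP : P.IsSymm) {v : ι → R} (hv : P *ᵥ v = 0) (A X : Matrix ι ι R) :
    v ⬝ᵥ (A * P + P * Aᵀ + X) *ᵥ v = v ⬝ᵥ X *ᵥ v := by
  have hvP : v ᵥ* P = 0 := by rw [← mulVec_transpose, hP.eq, hv]
  rw [add_mulVec, add_mulVec, dotProduct_add, dotProduct_add, ← mulVec_mulVec, hv,
    ← mulVec_mulVec, dotProduct_mulVec v P, hvP]
  simp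

variable {Q : Matrix κ κ ℝ}

lemma PosSemidef.dotProduct_mul_mul_transpose_mulVec_nonneg (hQ : Q.PosSemidef)
    (M : Matrix ι κ ℝ) (v : ι → ℝ) : 0 ≤ v ⬝ᵥ (M * Q * Mᵀ) *ᵥ v := by
  simpa [dotProduct_mul_mul_transpose_mulVec] using hQ.dotProduct_mulVec_nonneg (Mᵀ *ᵥ v)

lemma PosSemidef.mul_transpose_mulVec_eq_zero (hQ : Q.PosSemidef) {M : Matrix ι κ ℝ}
    {v : ι → ℝ} (h : v ⬝ᵥ (M * Q * Mᵀ) *ᵥ v = 0) : (Q * Mᵀ) *ᵥ v = 0 := by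
  rw [← mulVec_mulVec]
  exact (hQ.dotProduct_mulVec_zero_iff _).1 (by simpa [dotProduct_mul_mul_transpose_mulVec] using h)

end Matrix

/-- If `P` is symmetric PSD and solves the quadratic Lyapunov equation
`A P + P Aᵀ + H (P ⊗ P) Hᵀ + ∑ₖ Nₖ P Nₖᵀ + B Bᵀ = 0`, then every `v ∈ ker P`
satisfies `Bᵀ v = 0`, `P Nₖᵀ v = 0`, `(P ⊗ P) Hᵀ v = 0` and `P Aᵀ v = 0`. -/
theorem stmt8 {n m : ℕ} (A : Matrix (Fin n) (Fin n) ℝ)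
    (H : Matrix (Fin n) (Fin n × Fin n) ℝ)
    (N : Fin m → Matrix (Fin n) (Fin n) ℝ)
    (B : Matrix (Fin n) (Fin m) ℝ)
    (P : Matrix (Fin n) (Fin n) ℝ) (hP : P.PosSemidef)
    (heq : A * P + P * Aᵀ + H * (P ⊗ₖ P) * Hᵀ + ∑ k, N k * P * (N k)ᵀ + B * Bᵀ = 0)
    (v : Fin n → ℝ) (hv : P.mulVec v = 0) :
    Bᵀ.mulVec v = 0 ∧
    (∀ k, (P * (N k)ᵀ).mulVec v = 0) ∧
    ((P ⊗ₖ P) * Hᵀ).mulVec v = 0 ∧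
    (P * Aᵀ).mulVec v = 0 := by
  have hPP : (P ⊗ₖ P).PosSemidef := hP.kronecker hP
  have hq := congrArg (fun X => v ⬝ᵥ X *ᵥ v) heq
  rw [add_assoc, add_assoc,
    (isHermitian_iff_isSymm.1 hP.isHermitian).dotProduct_mul_add_mul_transpose_add_mulVec hv] at hq
  simp only [add_mulVec, dotProduct_add, sum_mulVec, dotProduct_sum, zero_mulVec,
    dotProduct_zero] at hq
  have hH₀ := hPP.dotProduct_mul_mul_transpose_mulVec_nonneg H v
  have hN₀ k := hP.dotProduct_mul_mul_transpose_mulVec_nonneg (N k) v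
  have hB₀ : 0 ≤ v ⬝ᵥ (B * Bᵀ) *ᵥ v := by
    rw [dotProduct_mul_transpose_mulVec]
    exact dotProduct_self_star_nonneg _
  have hNsum : 0 ≤ ∑ k, v ⬝ᵥ (N k * P * (N k)ᵀ) *ᵥ v := Finset.sum_nonneg fun k _ => hN₀ k
  have hHv := hPP.mul_transpose_mulVec_eq_zero (M := H) (v := v) (by linarith)
  have hNv k := hP.mul_transpose_mulVec_eq_zero
    ((Finset.sum_eq_zero_iff_of_nonneg fun k _ => hN₀ k).1 (by linarith) k (Finset.mem_univ k))
  have hBv : Bᵀ *ᵥ v = 0 :=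
    dotProduct_self_eq_zero.1 (by rw [← dotProduct_mul_transpose_mulVec]; linarith)
  refine ⟨hBv, hNv, hHv, ?_⟩
  have hlin := congrArg (· *ᵥ v) heq
  simp only [add_mulVec, sum_mulVec, ← mulVec_mulVec] at hlin hHv hNv hBv ⊢
  simpa [hv, hHv, hNv, hBv] using hlin
end

section
/- Let A ∈ ℝ^{n×n} satisfy ‖e^{A t}‖ ≤ β e^{-α t} for all t ≥ 0 with α, β > 0 (operator norm). Let Γ_B = ‖B Bᵀ‖, Γ_H = ‖H‖², Γ_N = ∑_{k=1}^m ‖N_k‖². Define the sequence P_k of PSD matrices by A P₁ + P₁ Aᵀ + B Bᵀ = 0 and A P_k + P_k Aᵀ + H (P_{k-1} ⊗ P_{k-1}) Hᵀ + ∑_j N_j P_{k-1} N_jᵀ + B Bᵀ = 0. Then ‖P₁‖ ≤ β² Γ_B/(2α) and ‖P_k‖ ≤ (β²/(2α)) (Γ_H ‖P_{k-1}‖² + Γ_N ‖P_{k-1}‖ + Γ_B) for all k ≥ 2. -/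
open Matrix Kronecker
open scoped Matrix.Norms.L2Operator

open Filter Topology MeasureTheory Set NormedSpace

/-!
If `e^{At}` decays like `β e^{-αt}`, the solution of `A P + P Aᵀ + M = 0` is
`P = ∫₀^∞ e^{At} M e^{Aᵀt} dt`: the derivative of `e^{At} P e^{Aᵀt}` is `-e^{At} M e^{Aᵀt}` and
`e^{At} P e^{Aᵀt} → 0`. Hence `‖P‖ ≤ ∫₀^∞ β² e^{-2αt} ‖M‖ dt = β² ‖M‖ / (2α)`. For `k ≥ 2` this is
applied with `M` the whole constant term of the `k`-th equation, whose norm is bounded termwise;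
the Kronecker term uses `‖X ⊗ Y‖ ≤ ‖X‖ ‖Y‖`, which follows from `(X ⊗ Y) vec V = vec (Y V Xᵀ)`
and `‖vec (X V)‖ ≤ ‖X‖ ‖vec V‖` (columnwise).
-/

section Kronecker

open WithLp

variable {𝕜 l m n p q : Type*} [RCLike 𝕜] [Fintype l] [Fintype m] [Fintype n] [Fintype p]
  [Fintype q]

lemma norm_toLp_vec_transpose (V : Matrix m n 𝕜) :
    ‖toLp 2 (vec Vᵀ)‖ = ‖toLp 2 (vec V)‖ := by
  simp only [EuclideanSpace.norm_eq, vec, transpose_apply, Fintype.sum_prod_type]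
  rw [Finset.sum_comm]

lemma sq_norm_toLp_vec (V : Matrix m n 𝕜) :
    ‖toLp 2 (vec V)‖ ^ 2 = ∑ j, ‖toLp 2 (Vᵀ j)‖ ^ 2 := by
  simp only [EuclideanSpace.norm_sq_eq, vec, transpose_apply, Fintype.sum_prod_type]

lemma norm_toLp_vec_mul_le [DecidableEq m] (X : Matrix l m 𝕜) (V : Matrix m n 𝕜) :
    ‖toLp 2 (vec (X * V))‖ ≤ ‖X‖ * ‖toLp 2 (vec V)‖ := by
  refine le_of_sq_le_sq ?_ (by positivity)
  have hcol : ∀ j, (X * V)ᵀ j = X *ᵥ Vᵀ j := fun j => by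
    ext i; simp [mulVec, dotProduct, mul_apply]
  rw [mul_pow, sq_norm_toLp_vec, sq_norm_toLp_vec, Finset.mul_sum]
  gcongr with j
  rw [hcol, ← mul_pow]
  exact pow_le_pow_left₀ (norm_nonneg _) (l2_opNorm_mulVec X (toLp 2 (Vᵀ j))) 2

lemma l2_opNorm_kronecker_le [DecidableEq n] [DecidableEq q]
    (X : Matrix m n 𝕜) (Y : Matrix p q 𝕜) :
    ‖X ⊗ₖ Y‖ ≤ ‖X‖ * ‖Y‖ := by
  rw [l2_opNorm_def]
  refine ContinuousLinearMap.opNorm_le_bound _ (by positivity) fun v => ?_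
  set V : Matrix q n 𝕜 := of fun k j => v (j, k)
  have hv : v = toLp 2 (vec V) := rfl
  have hXY : Y * V * Xᵀ = Y * (X * Vᵀ)ᵀ := by
    rw [transpose_mul, transpose_transpose, Matrix.mul_assoc]
  calc ‖toLp 2 ((X ⊗ₖ Y) *ᵥ vec V)‖ = ‖toLp 2 (vec (Y * (X * Vᵀ)ᵀ))‖ := by
        rw [kronecker_mulVec_vec, hXY]
    _ ≤ ‖Y‖ * (‖X‖ * ‖toLp 2 (vec V)‖) := by
        grw [norm_toLp_vec_mul_le, norm_toLp_vec_transpose, norm_toLp_vec_mul_le,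
          norm_toLp_vec_transpose]
    _ = ‖X‖ * ‖Y‖ * ‖v‖ := by rw [hv]; ring

end Kronecker

section Lyapunov

variable {ι : Type*} [Fintype ι] [DecidableEq ι]

lemma l2_opNorm_transpose {κ : Type*} [Fintype κ] [DecidableEq κ] (X : Matrix ι κ ℝ) :
    ‖Xᵀ‖ = ‖X‖ := by
  rw [← conjTranspose_eq_transpose_of_trivial, l2_opNorm_conjTranspose]

lemma l2_opNorm_mul_mul_transpose_le {κ : Type*} [Fintype κ] [DecidableEq κ]
    (X : Matrix ι κ ℝ) (M : Matrix κ κ ℝ) : ‖X * M * Xᵀ‖ ≤ ‖X‖ ^ 2 * ‖M‖ :=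
  calc ‖X * M * Xᵀ‖ ≤ ‖X‖ * ‖M‖ * ‖Xᵀ‖ := by grw [l2_opNorm_mul, l2_opNorm_mul]
    _ = ‖X‖ ^ 2 * ‖M‖ := by rw [l2_opNorm_transpose]; ring

lemma hasDerivAt_exp_smul_mul_mul_exp_smul_transpose (A P : Matrix ι ι ℝ) (t : ℝ) :
    HasDerivAt (fun s : ℝ => exp (s • A) * P * (exp (s • A))ᵀ)
      (exp (t • A) * (A * P + P * Aᵀ) * (exp (t • A))ᵀ) t := by
  have hT : ∀ s : ℝ, (exp (s • A))ᵀ = exp (s • Aᵀ) := fun s => by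
    rw [← exp_transpose, transpose_smul]
  simp only [hT]
  refine (((hasDerivAt_exp_smul_const A t).mul_const P).mul
    (hasDerivAt_exp_smul_const' Aᵀ t)).congr_deriv ?_
  noncomm_ring

variable {A : Matrix ι ι ℝ} {α β : ℝ}

lemma norm_exp_smul_mul_mul_exp_smul_transpose_le
    (hexp : ∀ t : ℝ, 0 ≤ t → ‖exp (t • A)‖ ≤ β * Real.exp (-α * t))
    (M : Matrix ι ι ℝ) {t : ℝ} (ht : 0 ≤ t) :
    ‖exp (t • A) * M * (exp (t • A))ᵀ‖ ≤ β ^ 2 * ‖M‖ * Real.exp (-(2 * α) * t) :=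
  calc _ ≤ ‖exp (t • A)‖ ^ 2 * ‖M‖ := l2_opNorm_mul_mul_transpose_le _ _
    _ ≤ (β * Real.exp (-α * t)) ^ 2 * ‖M‖ := by grw [hexp t ht]
    _ = β ^ 2 * ‖M‖ * Real.exp (-(2 * α) * t) := by
        rw [mul_pow, ← Real.exp_nat_mul]; ring_nf

lemma integrableOn_exp_smul_mul_mul_exp_smul_transpose (hα : 0 < α)
    (hexp : ∀ t : ℝ, 0 ≤ t → ‖exp (t • A)‖ ≤ β * Real.exp (-α * t))
    (M : Matrix ι ι ℝ) :
    IntegrableOn (fun t : ℝ => exp (t • A) * M * (exp (t • A))ᵀ) (Ioi 0) := by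
  refine Integrable.mono' (((integrableOn_exp_mul_Ioi (by linarith) 0).const_mul
    (β ^ 2 * ‖M‖))) ?_ ((ae_restrict_iff' measurableSet_Ioi).2 <|
      ae_of_all _ fun t ht => norm_exp_smul_mul_mul_exp_smul_transpose_le hexp M (le_of_lt ht))
  exact (continuous_iff_continuousAt.2 fun t =>
    (hasDerivAt_exp_smul_mul_mul_exp_smul_transpose A M t).continuousAt).aestronglyMeasurable

lemma tendsto_exp_smul_mul_mul_exp_smul_transpose_atTop (hα : 0 < α)
    (hexp : ∀ t : ℝ, 0 ≤ t → ‖exp (t • A)‖ ≤ β * Real.exp (-α * t))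
    (M : Matrix ι ι ℝ) :
    Tendsto (fun t : ℝ => exp (t • A) * M * (exp (t • A))ᵀ) atTop (𝓝 0) := by
  refine squeeze_zero_norm' ((eventually_ge_atTop 0).mono fun t ht =>
    norm_exp_smul_mul_mul_exp_smul_transpose_le hexp M ht) ?_
  simpa using (Real.tendsto_exp_atBot.comp
    (tendsto_id.const_mul_atTop_of_neg (by linarith : -(2 * α) < 0))).const_mul (β ^ 2 * ‖M‖)

theorem eq_integral_of_lyapunov (hα : 0 < α)
    (hexp : ∀ t : ℝ, 0 ≤ t → ‖exp (t • A)‖ ≤ β * Real.exp (-α * t))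
    {P M : Matrix ι ι ℝ} (hPM : A * P + P * Aᵀ + M = 0) :
    P = ∫ t : ℝ in Ioi 0, exp (t • A) * M * (exp (t • A))ᵀ := by
  have hM : A * P + P * Aᵀ = -M := eq_neg_of_add_eq_zero_left hPM
  have hderiv : ∀ t : ℝ, HasDerivAt (fun s : ℝ => exp (s • A) * P * (exp (s • A))ᵀ)
      (-(exp (t • A) * M * (exp (t • A))ᵀ)) t := fun t => by
    simpa [hM] using hasDerivAt_exp_smul_mul_mul_exp_smul_transpose A P t
  have hFTC := integral_Ioi_of_hasDerivAt_of_tendsto' (fun t _ => hderiv t)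
    (integrableOn_exp_smul_mul_mul_exp_smul_transpose hα hexp M).neg
    (tendsto_exp_smul_mul_mul_exp_smul_transpose_atTop hα hexp P)
  simpa [integral_neg] using hFTC.symm

theorem norm_le_of_lyapunov (hα : 0 < α)
    (hexp : ∀ t : ℝ, 0 ≤ t → ‖exp (t • A)‖ ≤ β * Real.exp (-α * t))
    {P M : Matrix ι ι ℝ} (hPM : A * P + P * Aᵀ + M = 0) :
    ‖P‖ ≤ β ^ 2 * ‖M‖ / (2 * α) := by
  rw [eq_integral_of_lyapunov hα hexp hPM]
  calc _ ≤ ∫ t : ℝ in Ioi 0, β ^ 2 * ‖M‖ * Real.exp (-(2 * α) * t) :=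
        norm_integral_le_of_norm_le
          ((integrableOn_exp_mul_Ioi (by linarith) 0).const_mul _)
          ((ae_restrict_iff' measurableSet_Ioi).2 <| ae_of_all _ fun t ht =>
            norm_exp_smul_mul_mul_exp_smul_transpose_le hexp M (le_of_lt ht))
    _ = β ^ 2 * ‖M‖ / (2 * α) := by
        rw [integral_const_mul, integral_exp_mul_Ioi (by linarith)]
        simp [field]

end Lyapunov

lemma l2_opNorm_forcing_le {ι κ : Type*} [Fintype ι] [DecidableEq ι] [Fintype κ]
    (H : Matrix ι (ι × ι) ℝ) (N : κ → Matrix ι ι ℝ) (Q C : Matrix ι ι ℝ) :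
    ‖H * (Q ⊗ₖ Q) * Hᵀ + ∑ j, N j * Q * (N j)ᵀ + C‖
      ≤ ‖H‖ ^ 2 * ‖Q‖ ^ 2 + (∑ j, ‖N j‖ ^ 2) * ‖Q‖ + ‖C‖ := by
  have hH : ‖H * (Q ⊗ₖ Q) * Hᵀ‖ ≤ ‖H‖ ^ 2 * ‖Q‖ ^ 2 :=
    calc _ ≤ ‖H‖ ^ 2 * ‖Q ⊗ₖ Q‖ := l2_opNorm_mul_mul_transpose_le _ _
      _ ≤ ‖H‖ ^ 2 * ‖Q‖ ^ 2 := by grw [l2_opNorm_kronecker_le, ← sq]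
  have hN : ‖∑ j, N j * Q * (N j)ᵀ‖ ≤ (∑ j, ‖N j‖ ^ 2) * ‖Q‖ :=
    calc _ ≤ ∑ j, ‖N j * Q * (N j)ᵀ‖ := norm_sum_le _ _
      _ ≤ ∑ j, ‖N j‖ ^ 2 * ‖Q‖ := by gcongr; exact l2_opNorm_mul_mul_transpose_le _ _
      _ = (∑ j, ‖N j‖ ^ 2) * ‖Q‖ := (Finset.sum_mul ..).symm
  grw [norm_add₃_le, hH, hN]

theorem stmt14_general {n m : ℕ} (A : Matrix (Fin n) (Fin n) ℝ)
    (B : Matrix (Fin n) (Fin m) ℝ)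
    (H : Matrix (Fin n) (Fin n × Fin n) ℝ)
    (N : Fin m → Matrix (Fin n) (Fin n) ℝ)
    (α β : ℝ) (hα : 0 < α)
    (hexp : ∀ t : ℝ, 0 ≤ t →
      ‖NormedSpace.exp (t • A)‖ ≤ β * Real.exp (-α * t))
    (P : ℕ → Matrix (Fin n) (Fin n) ℝ)
    (h1 : A * P 1 + P 1 * Aᵀ + B * Bᵀ = 0)
    (hk : ∀ k, 2 ≤ k →
      A * P k + P k * Aᵀ + H * (P (k - 1) ⊗ₖ P (k - 1)) * Hᵀ
        + ∑ j, N j * P (k - 1) * (N j)ᵀ + B * Bᵀ = 0) :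
    ‖P 1‖ ≤ β ^ 2 * ‖B * Bᵀ‖ / (2 * α) ∧
    ∀ k, 2 ≤ k →
      ‖P k‖ ≤ β ^ 2 / (2 * α) *
        (‖H‖ ^ 2 * ‖P (k - 1)‖ ^ 2 + (∑ j, ‖N j‖ ^ 2) * ‖P (k - 1)‖
          + ‖B * Bᵀ‖) := by
  refine ⟨norm_le_of_lyapunov hα hexp h1, fun k hk2 => ?_⟩
  have hPk : A * P k + P k * Aᵀ
      + (H * (P (k - 1) ⊗ₖ P (k - 1)) * Hᵀ + ∑ j, N j * P (k - 1) * (N j)ᵀ + B * Bᵀ) = 0 := by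
    rw [← hk k hk2]; abel
  calc ‖P k‖ ≤ β ^ 2 * ‖H * (P (k - 1) ⊗ₖ P (k - 1)) * Hᵀ
          + ∑ j, N j * P (k - 1) * (N j)ᵀ + B * Bᵀ‖ / (2 * α) := norm_le_of_lyapunov hα hexp hPk
    _ ≤ _ := by
        rw [mul_div_right_comm]
        gcongr
        exact l2_opNorm_forcing_le H N _ _

/-- If `‖e^{At}‖ ≤ β e^{-αt}` for `t ≥ 0` and the PSD matrices
`P_k` solve the fixed-point Lyapunov equations of the QB Gramian iteration, then
`‖P₁‖ ≤ β²Γ_B/(2α)` and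
`‖P_k‖ ≤ (β²/(2α))(Γ_H ‖P_{k-1}‖² + Γ_N ‖P_{k-1}‖ + Γ_B)` for `k ≥ 2`, where
`Γ_B = ‖BBᵀ‖`, `Γ_H = ‖H‖²`, `Γ_N = ∑ₖ ‖Nₖ‖²` (operator norms). -/
theorem stmt14 {n m : ℕ} (A : Matrix (Fin n) (Fin n) ℝ)
    (B : Matrix (Fin n) (Fin m) ℝ)
    (H : Matrix (Fin n) (Fin n × Fin n) ℝ)
    (N : Fin m → Matrix (Fin n) (Fin n) ℝ)
    (α β : ℝ) (hα : 0 < α) (hβ : 0 < β)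
    (hexp : ∀ t : ℝ, 0 ≤ t →
      ‖NormedSpace.exp (t • A)‖ ≤ β * Real.exp (-α * t))
    (P : ℕ → Matrix (Fin n) (Fin n) ℝ)
    (hpsd : ∀ k, 1 ≤ k → (P k).PosSemidef)
    (h1 : A * P 1 + P 1 * Aᵀ + B * Bᵀ = 0)
    (hk : ∀ k, 2 ≤ k →
      A * P k + P k * Aᵀ + H * (P (k - 1) ⊗ₖ P (k - 1)) * Hᵀ
        + ∑ j, N j * P (k - 1) * (N j)ᵀ + B * Bᵀ = 0) :
    ‖P 1‖ ≤ β ^ 2 * ‖B * Bᵀ‖ / (2 * α) ∧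
    ∀ k, 2 ≤ k →
      ‖P k‖ ≤ β ^ 2 / (2 * α) *
        (‖H‖ ^ 2 * ‖P (k - 1)‖ ^ 2 + (∑ j, ‖N j‖ ^ 2) * ‖P (k - 1)‖
          + ‖B * Bᵀ‖) :=
  stmt14_general A B H N α β hα hexp P h1 hk
end

section
/- Let α, β > 0 and Γ_B, Γ_H, Γ_N > 0, set D = 1 - β²Γ_N/(2α), and assume β²Γ_N/(2α) < 1 and 0 < D² - 4 (β²Γ_H/(2α)) (β²Γ_B/(2α)) < 1. Let (p_k) be any sequence of nonnegative reals with p₁ ≤ β²Γ_B/(2α) and p_k ≤ (β²/(2α))(Γ_H p_{k-1}² + Γ_N p_{k-1} + Γ_B). Then p_k ≤ P∞ for all k, where P∞ = (2α/(β²Γ_H)) (D - sqrt(D² - 4 (β²Γ_H/(2α)) (β²Γ_B/(2α)) ))/2 is the smaller fixed point of x ↦ (β²/(2α))(Γ_H x² + Γ_N x + Γ_B). -/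
/-!
With `a, b, c = β²Γ_H/(2α), β²Γ_N/(2α), β²Γ_B/(2α)`, the map `q x = a x² + b x + c` is
monotone on `[0, ∞)`, and its smaller fixed point `P∞` is nonnegative and at least `c = q 0`.
Hence `p₁ ≤ c ≤ P∞`, and inductively `p_{k+1} ≤ q p_k ≤ q P∞ = P∞`.
-/

open Set

theorem le_fixedPt_of_le_map {α : Type*} [Preorder α] {f : α → α} {s : Set α} {P : α}
    (hf : MonotoneOn f s) (hPs : P ∈ s) (hP : f P = P) (p : ℕ → α) (hps : ∀ k, p k ∈ s)
    (h1 : p 1 ≤ P) (hrec : ∀ k, 2 ≤ k → p k ≤ f (p (k - 1))) :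
    ∀ k, 1 ≤ k → p k ≤ P := by
  intro k hk
  induction k, hk using Nat.le_induction with
  | base => exact h1
  | succ n _ ih =>
    calc p (n + 1) ≤ f (p n) := by simpa using hrec (n + 1) (by omega)
      _ ≤ f P := hf (hps n) hPs ih
      _ = P := hP

section Quadratic

variable {a b c : ℝ}

theorem monotoneOn_quadratic (ha : 0 ≤ a) (hb : 0 ≤ b) :
    MonotoneOn (fun x : ℝ => a * x ^ 2 + b * x + c) (Ici 0) := by
  intro x (hx : 0 ≤ x) y _ hxy
  dsimp only
  gcongr

/-- The smaller fixed point of `x ↦ a x² + b x + c`. -/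
noncomputable def smallerFixedPoint (a b c : ℝ) : ℝ :=
  (1 - b - √((1 - b) ^ 2 - 4 * a * c)) / (2 * a)

theorem smallerFixedPoint_isFixedPt (ha : a ≠ 0) (hdisc : 0 ≤ (1 - b) ^ 2 - 4 * a * c) :
    a * smallerFixedPoint a b c ^ 2 + b * smallerFixedPoint a b c + c
      = smallerFixedPoint a b c := by
  have hs : discrim a (b - 1) c = √((1 - b) ^ 2 - 4 * a * c) * √((1 - b) ^ 2 - 4 * a * c) := by
    rw [Real.mul_self_sqrt hdisc, discrim]; ring
  have hroot := (quadratic_eq_zero_iff ha hs (smallerFixedPoint a b c)).mpr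
    (Or.inr (by rw [smallerFixedPoint]; ring))
  linear_combination hroot

theorem smallerFixedPoint_nonneg (ha : 0 < a) (hb : b ≤ 1) (hc : 0 ≤ c) :
    0 ≤ smallerFixedPoint a b c := by
  have hsqrt : √((1 - b) ^ 2 - 4 * a * c) ≤ 1 - b := by
    rw [Real.sqrt_le_left (by linarith)]
    nlinarith [mul_nonneg ha.le hc]
  exact div_nonneg (by linarith) (by positivity)

end Quadratic

theorem stmt15_general (α β ΓB ΓH ΓN : ℝ)
    (hα : 0 < α) (hβ : 0 < β) (hΓB : 0 < ΓB) (hΓH : 0 < ΓH) (hΓN : 0 < ΓN)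
    (hN : β ^ 2 * ΓN / (2 * α) < 1)
    (hd0 : 0 < (1 - β ^ 2 * ΓN / (2 * α)) ^ 2
      - 4 * (β ^ 2 * ΓH / (2 * α)) * (β ^ 2 * ΓB / (2 * α)))
    (p : ℕ → ℝ) (hpos : ∀ k, 0 ≤ p k)
    (hp1 : p 1 ≤ β ^ 2 * ΓB / (2 * α))
    (hrec : ∀ k, 2 ≤ k →
      p k ≤ β ^ 2 / (2 * α) * (ΓH * (p (k - 1)) ^ 2 + ΓN * p (k - 1) + ΓB)) :
    ∀ k, 1 ≤ k →
      p k ≤ 2 * α / (β ^ 2 * ΓH) *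
        ((1 - β ^ 2 * ΓN / (2 * α))
          - Real.sqrt ((1 - β ^ 2 * ΓN / (2 * α)) ^ 2
              - 4 * (β ^ 2 * ΓH / (2 * α)) * (β ^ 2 * ΓB / (2 * α)))) / 2 := by
  set a := β ^ 2 * ΓH / (2 * α)
  set b := β ^ 2 * ΓN / (2 * α)
  set c := β ^ 2 * ΓB / (2 * α)
  have ha : 0 < a := by positivity
  have hP_eq : 2 * α / (β ^ 2 * ΓH) * (1 - b - √((1 - b) ^ 2 - 4 * a * c)) / 2
      = smallerFixedPoint a b c := by
    simp only [smallerFixedPoint, a]; field_simp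
  have hmap : ∀ x, β ^ 2 / (2 * α) * (ΓH * x ^ 2 + ΓN * x + ΓB) = a * x ^ 2 + b * x + c := by
    intro x; simp only [a, b, c]; field_simp
  have hfix := smallerFixedPoint_isFixedPt ha.ne' hd0.le
  have hP0 := smallerFixedPoint_nonneg ha hN.le (by positivity : 0 ≤ c)
  have hcP : c ≤ smallerFixedPoint a b c := by
    nlinarith [mul_nonneg ha.le (sq_nonneg (smallerFixedPoint a b c)),
      mul_nonneg (by positivity : 0 ≤ b) hP0]
  rw [hP_eq]
  simp only [hmap] at hrec
  exact le_fixedPt_of_le_map (monotoneOn_quadratic ha.le (by positivity)) hP0 hfix p hpos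
    (hp1.trans hcP) hrec

/-- Under the convergence conditions on `α, β, Γ_B, Γ_H, Γ_N`
(with `D = 1 - β²Γ_N/(2α)`), any nonnegative sequence with
`p₁ ≤ β²Γ_B/(2α)` and `p_k ≤ (β²/(2α))(Γ_H p_{k-1}² + Γ_N p_{k-1} + Γ_B)` is
bounded by the smaller fixed point
`P∞ = (2α/(β²Γ_H)) (D - √(D² - 4(β²Γ_H/(2α))(β²Γ_B/(2α))))/2`. -/
theorem stmt15 (α β ΓB ΓH ΓN : ℝ)
    (hα : 0 < α) (hβ : 0 < β) (hΓB : 0 < ΓB) (hΓH : 0 < ΓH) (hΓN : 0 < ΓN)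
    (hN : β ^ 2 * ΓN / (2 * α) < 1)
    (hd0 : 0 < (1 - β ^ 2 * ΓN / (2 * α)) ^ 2
      - 4 * (β ^ 2 * ΓH / (2 * α)) * (β ^ 2 * ΓB / (2 * α)))
    (hd1 : (1 - β ^ 2 * ΓN / (2 * α)) ^ 2
      - 4 * (β ^ 2 * ΓH / (2 * α)) * (β ^ 2 * ΓB / (2 * α)) < 1)
    (p : ℕ → ℝ) (hpos : ∀ k, 0 ≤ p k)
    (hp1 : p 1 ≤ β ^ 2 * ΓB / (2 * α))
    (hrec : ∀ k, 2 ≤ k →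
      p k ≤ β ^ 2 / (2 * α) * (ΓH * (p (k - 1)) ^ 2 + ΓN * p (k - 1) + ΓB)) :
    ∀ k, 1 ≤ k →
      p k ≤ 2 * α / (β ^ 2 * ΓH) *
        ((1 - β ^ 2 * ΓN / (2 * α))
          - Real.sqrt ((1 - β ^ 2 * ΓN / (2 * α)) ^ 2
              - 4 * (β ^ 2 * ΓH / (2 * α)) * (β ^ 2 * ΓB / (2 * α)))) / 2 :=
  stmt15_general α β ΓB ΓH ΓN hα hβ hΓB hΓH hΓN hN hd0 p hpos hp1 hrec
end

section
/- Let P, Q be symmetric n×n matrices with P positive definite and Q positive semidefinite, with Cholesky-type factorizations P = SᵀS and Q = RᵀR. Let S Rᵀ = U Σ Vᵀ be a singular value decomposition with Σ invertible, and set T = Sᵀ U Σ^{-1/2}. Then T is invertible, and the transformed Gramians T^{-1}P(T^{-1})ᵀ and TᵀQT are both equal to the diagonal matrix Σ, i.e. T^{-1} P T^{-ᵀ} = Σ and Tᵀ Q T = Σ. -/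
open Matrix

/-- Balancing transformation. Let `P = SᵀS` be positive definite
and `Q = RᵀR` positive definite, with `S, R` square, `S Rᵀ = U Σ Vᵀ` an SVD
(`U, V` orthogonal, `Σ = diagonal σ` with positive singular values), and
`T = Sᵀ U Σ^{-1/2}`. Then `T` is invertible and the transformed Gramians
`T⁻¹ P (T⁻¹)ᵀ` and `Tᵀ Q T` are both equal to the diagonal matrix `Σ`. -/
theorem stmt18 {n : ℕ}
    (P Q S R U V : Matrix (Fin n) (Fin n) ℝ)
    (σ : Fin n → ℝ) (hσ : ∀ i, 0 < σ i)
    (hP : P = Sᵀ * S) (hPpd : P.PosDef)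
    (hQ : Q = Rᵀ * R) (hQpd : Q.PosDef)
    (hU : Uᵀ * U = 1) (hU' : U * Uᵀ = 1)
    (hV : Vᵀ * V = 1) (hV' : V * Vᵀ = 1)
    (hSVD : S * Rᵀ = U * Matrix.diagonal σ * Vᵀ) :
    IsUnit (Sᵀ * U * Matrix.diagonal fun i => (Real.sqrt (σ i))⁻¹) ∧
    (Sᵀ * U * Matrix.diagonal fun i => (Real.sqrt (σ i))⁻¹)⁻¹ * P *
        ((Sᵀ * U * Matrix.diagonal fun i => (Real.sqrt (σ i))⁻¹)⁻¹)ᵀ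
      = Matrix.diagonal σ ∧
    (Sᵀ * U * Matrix.diagonal fun i => (Real.sqrt (σ i))⁻¹)ᵀ * Q *
        (Sᵀ * U * Matrix.diagonal fun i => (Real.sqrt (σ i))⁻¹)
      = Matrix.diagonal σ := by
  have hσ' : ∀ i, Real.sqrt (σ i) ≠ 0 :=
    fun i => ne_of_gt (Real.sqrt_pos.mpr (hσ i))
  set D := Matrix.diagonal σ with hD
  set E := (Matrix.diagonal fun i => (Real.sqrt (σ i))⁻¹) with hE
  set F := (Matrix.diagonal fun i => Real.sqrt (σ i)) with hF
  have hEF : E * F = 1 := by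
    rw [hE, hF, Matrix.diagonal_mul_diagonal, ← Matrix.diagonal_one]
    exact congrArg Matrix.diagonal (funext fun i => inv_mul_cancel₀ (hσ' i))
  have hFE : F * E = 1 := by
    rw [hE, hF, Matrix.diagonal_mul_diagonal, ← Matrix.diagonal_one]
    exact congrArg Matrix.diagonal (funext fun i => mul_inv_cancel₀ (hσ' i))
  have hFF : F * F = D := by
    rw [hF, hD, Matrix.diagonal_mul_diagonal]
    exact congrArg Matrix.diagonal (funext fun i => Real.mul_self_sqrt (hσ i).le)
  -- S is invertible
  have hSdet : IsUnit S.det := by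
    have h := hPpd.det_pos
    rw [hP, Matrix.det_mul, Matrix.det_transpose] at h
    refine isUnit_iff_ne_zero.mpr ?_
    intro h0; rw [h0, mul_zero] at h; exact lt_irrefl 0 h
  have hStdet : IsUnit (Sᵀ).det := by rwa [Matrix.det_transpose]
  have hSS : S * S⁻¹ = 1 := Matrix.mul_nonsing_inv S hSdet
  have hStSt : (Sᵀ)⁻¹ * Sᵀ = 1 := Matrix.nonsing_inv_mul Sᵀ hStdet
  have hStSt' : Sᵀ * (Sᵀ)⁻¹ = 1 := Matrix.mul_nonsing_inv Sᵀ hStdet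
  -- cancellation lemmas
  have cU : ∀ X : Matrix (Fin n) (Fin n) ℝ, Uᵀ * (U * X) = X :=
    fun X => by rw [← Matrix.mul_assoc, hU, Matrix.one_mul]
  have cU' : ∀ X : Matrix (Fin n) (Fin n) ℝ, U * (Uᵀ * X) = X :=
    fun X => by rw [← Matrix.mul_assoc, hU', Matrix.one_mul]
  have cV : ∀ X : Matrix (Fin n) (Fin n) ℝ, Vᵀ * (V * X) = X :=
    fun X => by rw [← Matrix.mul_assoc, hV, Matrix.one_mul]
  have cEF : ∀ X : Matrix (Fin n) (Fin n) ℝ, E * (F * X) = X :=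
    fun X => by rw [← Matrix.mul_assoc, hEF, Matrix.one_mul]
  have cSt : ∀ X : Matrix (Fin n) (Fin n) ℝ, (Sᵀ)⁻¹ * (Sᵀ * X) = X :=
    fun X => by rw [← Matrix.mul_assoc, hStSt, Matrix.one_mul]
  have cS : ∀ X : Matrix (Fin n) (Fin n) ℝ, S * (S⁻¹ * X) = X :=
    fun X => by rw [← Matrix.mul_assoc, hSS, Matrix.one_mul]
  -- T has a right inverse
  have hTW : (Sᵀ * U * E) * (F * (Uᵀ * (Sᵀ)⁻¹)) = 1 := by
    simp only [Matrix.mul_assoc]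
    rw [cEF, cU', hStSt']
  have hWT : (F * (Uᵀ * (Sᵀ)⁻¹)) * (Sᵀ * U * E) = 1 := by
    simp only [Matrix.mul_assoc]
    rw [cSt, cU]; exact hFE
  have hUnit : IsUnit (Sᵀ * U * E) := ⟨⟨_, _, hTW, hWT⟩, rfl⟩
  have hTinv : (Sᵀ * U * E)⁻¹ = F * (Uᵀ * (Sᵀ)⁻¹) := Matrix.inv_eq_right_inv hTW
  refine ⟨hUnit, ?_, ?_⟩
  · -- T⁻¹ P (T⁻¹)ᵀ = D
    rw [hTinv, hP]
    have hWt : (F * (Uᵀ * (Sᵀ)⁻¹))ᵀ = S⁻¹ * (U * F) := by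
      simp only [Matrix.transpose_mul, Matrix.transpose_transpose,
        Matrix.transpose_nonsing_inv, Matrix.diagonal_transpose, hF,
        Matrix.mul_assoc]
    rw [hWt]
    simp only [Matrix.mul_assoc]
    rw [cSt, cS, cU]; exact hFF
  · -- Tᵀ Q T = D
    rw [hQ]
    have hSVDT : R * Sᵀ = V * (D * Uᵀ) := by
      have := congrArg Matrix.transpose hSVD
      simpa [Matrix.transpose_mul, Matrix.diagonal_transpose, Matrix.mul_assoc,
        hD] using this
    have hTt : (Sᵀ * U * E)ᵀ = E * (Uᵀ * S) := by
      simp only [Matrix.transpose_mul, Matrix.transpose_transpose,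
        Matrix.diagonal_transpose, hE, Matrix.mul_assoc]
    rw [hTt]
    have key : E * (Uᵀ * S) * (Rᵀ * R) * (Sᵀ * U * E)
        = E * (Uᵀ * ((S * Rᵀ) * ((R * Sᵀ) * (U * E)))) := by
      simp only [Matrix.mul_assoc]
    rw [key, hSVD, hSVDT]
    simp only [Matrix.mul_assoc]
    rw [cU, cV, cU]
    -- now : E * (D * (D * E)) = D
    rw [hE, hD, Matrix.diagonal_mul_diagonal, Matrix.diagonal_mul_diagonal,
      Matrix.diagonal_mul_diagonal]
    refine congrArg Matrix.diagonal (funext fun i => ?_)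
    have h : σ i = Real.sqrt (σ i) * Real.sqrt (σ i) :=
      (Real.mul_self_sqrt (hσ i).le).symm
    rw [h]
    field_simp
    rw [Real.sqrt_sq (Real.sqrt_nonneg _), div_eq_iff (pow_ne_zero 2 (hσ' i))]
    ring
end
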